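/- The ESBIII density f(x) = (ck/2) (sign(x)·x/(1+sign(x)ε))^{-(c+1)} (1 + (sign(x)·x/(1+sign(x)ε))^{-c})^{-(k+1)}, defined for x ∈ ℝ \ {0}, integrates to 1 over ℝ. -/

import Mathlib

/-!
On each half-line the ESBIII density is half of a rescaled Dagum density
`c k u^(-c-1) (1 + u^(-c))^(-k-1)`, with scale `1 + ε` on the right and `1 - ε` on the left.
The Dagum density has the primitive `(1 + u^(-c))^(-k)`, which rises from `0` to `1` on `(0, ∞)`,
so a copy rescaled by `a` has mass `a`, and the total mass is `((1 + ε) + (1 - ε)) / 2 = 1`.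
-/

open Real

/-- sign function with sign(0) = 1, as in the paper. -/
noncomputable def sgn (x : ℝ) : ℝ := if x < 0 then -1 else 1

open MeasureTheory Set Filter Topology

section HalfLine

variable {E : Type*} [NormedAddCommGroup E]

theorem integrableOn_Ioi_comp_div_iff (f : ℝ → E) {a : ℝ} (ha : 0 < a) :
    IntegrableOn (fun x => f (x / a)) (Ioi 0) ↔ IntegrableOn f (Ioi 0) := by
  simpa only [div_eq_mul_inv, zero_mul] using
    integrableOn_Ioi_comp_mul_right_iff f 0 (inv_pos.mpr ha)

theorem integral_Ioi_comp_div [NormedSpace ℝ E] (f : ℝ → E) {a : ℝ} (ha : 0 < a) :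
    ∫ x in Ioi 0, f (x / a) = a • ∫ x in Ioi 0, f x := by
  simpa only [div_eq_mul_inv, zero_mul, inv_inv] using
    integral_comp_mul_right_Ioi f 0 (inv_pos.mpr ha)

theorem integral_eq_integral_Ioi_comp_neg_add_integral_Ioi [NormedSpace ℝ E] {f : ℝ → E}
    (hneg : IntegrableOn (fun x => f (-x)) (Ioi 0)) (hpos : IntegrableOn f (Ioi 0)) :
    ∫ x, f x = (∫ x in Ioi 0, f (-x)) + ∫ x in Ioi 0, f x := by
  have hIic : IntegrableOn f (Iic 0) := by
    have hneg_emb : MeasurableEmbedding fun x : ℝ => -x := (Homeomorph.neg ℝ).measurableEmbedding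
    rw [← Measure.map_neg_eq_self (volume : Measure ℝ), hneg_emb.integrableOn_map_iff]
    simp_rw [neg_preimage, neg_Iic, neg_zero]
    exact (integrableOn_Ici_iff_integrableOn_Ioi).mpr hneg
  rw [← intervalIntegral.integral_Iic_add_Ioi hIic hpos, integral_comp_neg_Ioi, neg_zero]

end HalfLine

noncomputable def dagumPDF (c k u : ℝ) : ℝ := c * k * u ^ (-(c + 1)) * (1 + u ^ (-c)) ^ (-(k + 1))

/-- The Dagum distribution function `(1 + u^(-c))^(-k)`, written in a form continuous at `0`:
since `0 ^ (-c) = 0` in Lean, the other form would take the value `1` there. -/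
noncomputable def dagumCDF (c k u : ℝ) : ℝ := (u ^ c / (1 + u ^ c)) ^ k

section Dagum

variable {c k : ℝ}

theorem dagumCDF_zero (hc : c ≠ 0) (hk : k ≠ 0) : dagumCDF c k 0 = 0 := by
  simp [dagumCDF, zero_rpow hc, zero_rpow hk]

theorem dagumCDF_of_pos {u : ℝ} (hu : 0 < u) : dagumCDF c k u = (1 + u ^ (-c)) ^ (-k) := by
  have : u ^ c / (1 + u ^ c) = (1 + u ^ (-c))⁻¹ := by
    rw [rpow_neg hu.le]
    field_simp
    ring
  rw [dagumCDF, this, inv_rpow (by positivity), ← rpow_neg (by positivity)]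

theorem hasDerivAt_dagumCDF {u : ℝ} (hu : 0 < u) :
    HasDerivAt (dagumCDF c k) (dagumPDF c k u) u := by
  have hbase : 0 < 1 + u ^ (-c) := by positivity
  have h := ((hasDerivAt_rpow_const (p := -c) (Or.inl hu.ne')).const_add 1).rpow_const
    (p := -k) (Or.inl hbase.ne')
  refine (h.congr_of_eventuallyEq ?_).congr_deriv ?_
  · filter_upwards [Ioi_mem_nhds hu] with v hv using dagumCDF_of_pos hv
  · rw [dagumPDF, neg_add', neg_add']
    ring

theorem dagumPDF_nonneg (hc : 0 ≤ c) (hk : 0 ≤ k) {u : ℝ} (hu : 0 ≤ u) : 0 ≤ dagumPDF c k u := by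
  unfold dagumPDF
  positivity

theorem continuousAt_dagumCDF_zero (hc : 0 < c) (hk : 0 ≤ k) : ContinuousAt (dagumCDF c k) 0 := by
  have hpow : ContinuousAt (fun u : ℝ => u ^ c) 0 :=
    continuousAt_id.rpow_const (Or.inr hc.le)
  exact (hpow.div (continuousAt_const.add hpow) (by simp [zero_rpow hc.ne'])).rpow_const
    (Or.inr hk)

theorem tendsto_dagumCDF_atTop (hc : 0 < c) : Tendsto (dagumCDF c k) atTop (𝓝 1) := by
  have h := ((tendsto_rpow_neg_atTop hc).const_add 1).rpow_const (p := -k) (by simp)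
  rw [add_zero, one_rpow] at h
  exact h.congr' (eventually_gt_atTop 0 |>.mono fun u hu => (dagumCDF_of_pos hu).symm)

theorem integrableOn_dagumPDF (hc : 0 < c) (hk : 0 < k) : IntegrableOn (dagumPDF c k) (Ioi 0) :=
  integrableOn_Ioi_deriv_of_nonneg (continuousAt_dagumCDF_zero hc hk.le).continuousWithinAt
    (fun _ hu => hasDerivAt_dagumCDF hu) (fun _ hu => dagumPDF_nonneg hc.le hk.le (le_of_lt hu))
    (tendsto_dagumCDF_atTop hc)

theorem integral_dagumPDF (hc : 0 < c) (hk : 0 < k) : ∫ u in Ioi 0, dagumPDF c k u = 1 := by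
  rw [integral_Ioi_of_hasDerivAt_of_nonneg
    (continuousAt_dagumCDF_zero hc hk.le).continuousWithinAt (fun _ hu => hasDerivAt_dagumCDF hu)
    (fun _ hu => dagumPDF_nonneg hc.le hk.le (le_of_lt hu)) (tendsto_dagumCDF_atTop hc),
    dagumCDF_zero hc.ne' hk.ne', sub_zero]

end Dagum

noncomputable def esbiiiPDF (c k ε x : ℝ) : ℝ :=
  (c * k / 2) * ((sgn x * x) / (1 + sgn x * ε)) ^ (-(c + 1)) *
    (1 + ((sgn x * x) / (1 + sgn x * ε)) ^ (-c)) ^ (-(k + 1))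

section ESBIII

variable {c k ε x : ℝ}

theorem esbiiiPDF_of_pos (hx : 0 < x) :
    esbiiiPDF c k ε x = 2⁻¹ * dagumPDF c k (x / (1 + ε)) := by
  simp only [esbiiiPDF, dagumPDF, sgn, if_neg hx.not_gt, one_mul]
  ring

theorem esbiiiPDF_neg_of_pos (hx : 0 < x) :
    esbiiiPDF c k ε (-x) = 2⁻¹ * dagumPDF c k (x / (1 - ε)) := by
  simp only [esbiiiPDF, dagumPDF, sgn, if_pos (neg_neg_of_pos hx), neg_mul_neg, one_mul,
    neg_one_mul, ← sub_eq_add_neg]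
  ring

end ESBIII

theorem esbiii_pdf_integral (c k ε : ℝ) (hc : 0 < c) (hk : 0 < k)
    (hε : ε ∈ Set.Ioo (-1 : ℝ) 1) :
    ∫ x : ℝ,
      (c * k / 2) * ((sgn x * x) / (1 + sgn x * ε)) ^ (-(c + 1)) *
        (1 + ((sgn x * x) / (1 + sgn x * ε)) ^ (-c)) ^ (-(k + 1)) = 1 := by
  show ∫ x, esbiiiPDF c k ε x = 1
  have hε₁ : 0 < 1 + ε := by linarith [hε.1]
  have hε₂ : 0 < 1 - ε := by linarith [hε.2]
  have hint {a : ℝ} (ha : 0 < a) :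
      IntegrableOn (fun x => 2⁻¹ * dagumPDF c k (x / a)) (Ioi 0) :=
    ((integrableOn_Ioi_comp_div_iff _ ha).mpr (integrableOn_dagumPDF hc hk)).const_mul _
  have hneg : EqOn (fun x => esbiiiPDF c k ε (-x)) (fun x => 2⁻¹ * dagumPDF c k (x / (1 - ε)))
      (Ioi 0) := fun _ hx => esbiiiPDF_neg_of_pos hx
  have hpos : EqOn (esbiiiPDF c k ε) (fun x => 2⁻¹ * dagumPDF c k (x / (1 + ε))) (Ioi 0) :=
    fun _ hx => esbiiiPDF_of_pos hx
  rw [integral_eq_integral_Ioi_comp_neg_add_integral_Ioi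
      ((hint hε₂).congr_fun hneg.symm measurableSet_Ioi)
      ((hint hε₁).congr_fun hpos.symm measurableSet_Ioi),
    setIntegral_congr_fun measurableSet_Ioi hneg, setIntegral_congr_fun measurableSet_Ioi hpos,
    integral_const_mul, integral_const_mul, integral_Ioi_comp_div _ hε₂,
    integral_Ioi_comp_div _ hε₁, integral_dagumPDF hc hk, smul_eq_mul, smul_eq_mul]
  ring
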